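/- For all positive integers n, k and every partition α with at most k parts each at most n, the multiset of arm–leg pairs, computed in T*, of the cells of T*₂ equals the multiset of arm–leg pairs of the Young diagram D of α; that is, AL_{T*}(T*₂) = AL(D) as multisets of pairs. -/

import Mathlib

/-- The skew diagram with rows `a,…,b`, where row `i` contains the cells
`(i,j)` for `lo i ≤ j ≤ hi i`. -/
def skewD (a b : ℕ) (lo hi : ℕ → ℕ) : Finset (ℕ × ℕ) :=
  (Finset.Icc a b).biUnion fun i => (Finset.Icc (lo i) (hi i)).image fun j => (i, j)

/-- Arm length: number of cells of `G` in the same row, strictly to the right. -/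
def arm (G : Finset (ℕ × ℕ)) (x : ℕ × ℕ) : ℕ :=
  (G.filter fun y => y.1 = x.1 ∧ x.2 < y.2).card

/-- Leg length: number of cells of `G` in the same column, strictly below
(rows are numbered bottom to top). -/
def leg (G : Finset (ℕ × ℕ)) (x : ℕ × ℕ) : ℕ :=
  (G.filter fun y => y.2 = x.2 ∧ y.1 < x.1).card

/-- Multiset of arm–leg pairs of the cells of `E`, computed in `G`. -/
def AL (G E : Finset (ℕ × ℕ)) : Multiset (ℕ × ℕ) :=
  E.val.map fun x => (arm G x, leg G x)

/-- Multiset of hook lengths of `G`. -/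
def hookMS (G : Finset (ℕ × ℕ)) : Multiset ℕ :=
  G.val.map fun x => arm G x + leg G x + 1

/-- The skew diagram `T`. -/
def TT (n k : ℕ) (α : ℕ → ℕ) : Finset (ℕ × ℕ) :=
  skewD 1 k (fun i => α 1 - α i + 1) (fun i => n + α 1 - α i)

/-- The skew diagram `V`. -/
def VV (n k : ℕ) (α : ℕ → ℕ) : Finset (ℕ × ℕ) :=
  skewD (k + 1) (2 * k) (fun i => n + α 1 - α (i - k) + 1) (fun _ => n + α 1)

/-- The skew diagram `SQ = T ∪ V`. -/
def SQ (n k : ℕ) (α : ℕ → ℕ) : Finset (ℕ × ℕ) :=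
  TT n k α ∪ VV n k α

/-- The `k × n` rectangle `R`. -/
def RR (n k : ℕ) : Finset (ℕ × ℕ) :=
  skewD 1 k (fun _ => 1) (fun _ => n)

/-- The Young diagram `D` of `α`. -/
def DD (k : ℕ) (α : ℕ → ℕ) : Finset (ℕ × ℕ) :=
  skewD 1 k (fun _ => 1) (fun i => α (k + 1 - i))

/-- The 180° rotation `T*` of `T`. -/
def Tstar (n k : ℕ) (α : ℕ → ℕ) : Finset (ℕ × ℕ) :=
  skewD 1 k (fun i => α (k + 1 - i) - α k + 1) (fun i => n + α (k + 1 - i) - α k)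

/-- The region `T*₂` of `T*`. -/
def TstarTwo (n k : ℕ) (α : ℕ → ℕ) : Finset (ℕ × ℕ) :=
  skewD 1 k (fun _ => n - α k + 1) (fun i => n + α (k + 1 - i) - α k)


/-!
Cut `T*` along the column `c = n - α_k`. The cells to the right of the cut form `T*₂`, which is
`D` translated `c` columns to the right. Arms only look to the right and legs only look down
the same column, so the arm and leg of a cell of `T*₂` do not see the part of `T*` left of the
cut, and translating does not change them.
-/

open Finset

lemma mem_skewD {a b i j : ℕ} {lo hi : ℕ → ℕ} :
    (i, j) ∈ skewD a b lo hi ↔ a ≤ i ∧ i ≤ b ∧ lo i ≤ j ∧ j ≤ hi i := by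
  simp only [skewD, mem_biUnion, mem_image, mem_Icc, Prod.mk.injEq]
  constructor
  · rintro ⟨i, hi, j, hj, rfl, rfl⟩
    exact ⟨hi.1, hi.2, hj⟩
  · rintro ⟨h1, h2, h3⟩
    exact ⟨i, ⟨h1, h2⟩, j, h3, rfl, rfl⟩

section ColumnCut

variable (G E : Finset (ℕ × ℕ)) (c : ℕ)

lemma arm_filter_col_gt {x : ℕ × ℕ} (hx : c < x.2) :
    arm (G.filter fun y => c < y.2) x = arm G x := by
  unfold arm
  rw [filter_filter]
  congr 1
  exact filter_congr fun y _ => by omega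

lemma leg_filter_col_gt {x : ℕ × ℕ} (hx : c < x.2) :
    leg (G.filter fun y => c < y.2) x = leg G x := by
  unfold leg
  rw [filter_filter]
  congr 1
  exact filter_congr fun y _ => by omega

lemma AL_filter_col_gt (hE : ∀ x ∈ E, c < x.2) :
    AL (G.filter fun y => c < y.2) E = AL G E :=
  Multiset.map_congr rfl fun x hx => by
    rw [arm_filter_col_gt G c (hE x hx), leg_filter_col_gt G c (hE x hx)]

end ColumnCut

def shiftCols (c : ℕ) : ℕ × ℕ ↪ ℕ × ℕ :=
  (Function.Embedding.refl ℕ).prodMap (addRightEmbedding c)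

@[simp]
lemma shiftCols_apply (c : ℕ) (x : ℕ × ℕ) : shiftCols c x = (x.1, x.2 + c) := rfl

section Translation

variable (G E : Finset (ℕ × ℕ)) (c : ℕ)

lemma arm_map_shiftCols (x : ℕ × ℕ) : arm (G.map (shiftCols c)) (shiftCols c x) = arm G x := by
  unfold arm
  rw [filter_map, card_map]
  congr 1
  exact filter_congr fun y _ => by simp

lemma leg_map_shiftCols (x : ℕ × ℕ) : leg (G.map (shiftCols c)) (shiftCols c x) = leg G x := by
  unfold leg
  rw [filter_map, card_map]
  congr 1
  exact filter_congr fun y _ => by simp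

lemma AL_map_shiftCols : AL (G.map (shiftCols c)) (E.map (shiftCols c)) = AL G E := by
  simp only [AL, map_val, Multiset.map_map, Function.comp_def, arm_map_shiftCols,
    leg_map_shiftCols]

end Translation

section Staircase

variable {n k : ℕ} {α : ℕ → ℕ}

lemma rowLength_bounds (hα1 : α 1 ≤ n)
    (hmono : ∀ i j, 1 ≤ i → i ≤ j → j ≤ k → α j ≤ α i) {i : ℕ} (hi1 : 1 ≤ i) (hik : i ≤ k) :
    α k ≤ α (k + 1 - i) ∧ α (k + 1 - i) ≤ n :=
  ⟨hmono _ k (by omega) (by omega) le_rfl, (hmono 1 _ le_rfl (by omega) (by omega)).trans hα1⟩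

lemma TstarTwo_eq_filter_Tstar (hα1 : α 1 ≤ n)
    (hmono : ∀ i j, 1 ≤ i → i ≤ j → j ≤ k → α j ≤ α i) :
    TstarTwo n k α = (Tstar n k α).filter fun y => n - α k < y.2 := by
  ext ⟨i, j⟩
  simp only [TstarTwo, Tstar, mem_filter, mem_skewD]
  constructor
  · rintro ⟨hi1, hik, hj⟩
    have := rowLength_bounds hα1 hmono hi1 hik
    omega
  · rintro ⟨⟨hi1, hik, hj⟩, hjc⟩
    have := rowLength_bounds hα1 hmono hi1 hik
    omega

lemma TstarTwo_eq_map_shiftCols_DD (hα1 : α 1 ≤ n)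
    (hmono : ∀ i j, 1 ≤ i → i ≤ j → j ≤ k → α j ≤ α i) :
    TstarTwo n k α = (DD k α).map (shiftCols (n - α k)) := by
  ext ⟨i, j⟩
  simp only [TstarTwo, DD, mem_map, mem_skewD, shiftCols_apply, Prod.exists, Prod.mk.injEq]
  constructor
  · rintro ⟨hi1, hik, hj⟩
    have := rowLength_bounds hα1 hmono hi1 hik
    exact ⟨i, j - (n - α k), ⟨hi1, hik, by omega⟩, rfl, by omega⟩
  · rintro ⟨i, j, ⟨hi1, hik, hj⟩, rfl, rfl⟩
    have := rowLength_bounds hα1 hmono hi1 hik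
    omega

end Staircase

theorem AL_Tstar_TstarTwo_eq_AL_D_general (n k : ℕ) (α : ℕ → ℕ) (hα1 : α 1 ≤ n)
    (hmono : ∀ i j, 1 ≤ i → i ≤ j → j ≤ k → α j ≤ α i) :
    AL (Tstar n k α) (TstarTwo n k α) = AL (DD k α) (DD k α) := by
  have hcut := TstarTwo_eq_filter_Tstar hα1 hmono
  have hshift := TstarTwo_eq_map_shiftCols_DD hα1 hmono
  have hright : ∀ x ∈ TstarTwo n k α, n - α k < x.2 := fun x hx => by
    rw [hcut] at hx
    exact (mem_filter.mp hx).2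
  calc AL (Tstar n k α) (TstarTwo n k α)
      = AL (TstarTwo n k α) (TstarTwo n k α) := by
        rw [← AL_filter_col_gt _ _ _ hright, ← hcut]
    _ = AL (DD k α) (DD k α) := by rw [hshift, AL_map_shiftCols]

/-- `AL_{T*}(T*₂) = AL(D)`. -/
theorem AL_Tstar_TstarTwo_eq_AL_D (n k : ℕ) (α : ℕ → ℕ) (hn : 0 < n)
    (hk : 0 < k) (hα1 : α 1 ≤ n)
    (hmono : ∀ i j, 1 ≤ i → i ≤ j → j ≤ k → α j ≤ α i) :
    AL (Tstar n k α) (TstarTwo n k α) = AL (DD k α) (DD k α) :=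
  AL_Tstar_TstarTwo_eq_AL_D_general n k α hα1 hmono
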